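/- arXiv:1311.3363 — 4 statements merged into one kernel-verified Lean document; each statement's English description precedes it below -/
import Mathlib

section
/- Let x, v, y be points in ℝ² with v distinct from x and y. If the angle ∠xvy is at least θ for some θ ∈ (0, π], then |x − y| ≥ c(θ)·(|x − v| + |y − v|) for some constant c(θ) > 0 depending only on θ; in particular one may take c(θ) = sin(θ/2)/2. -/
/-- If the angle `∠ x v y` is at least `θ ∈ (0, π]`, then
`|x - y| ≥ c(θ) (|x - v| + |y - v|)` with `c(θ) = sin(θ/2)/2 > 0`. -/
theorem stmt2 (x v y : EuclideanSpace ℝ (Fin 2)) (θ : ℝ)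
    (hvx : v ≠ x) (hvy : v ≠ y) (hθ : θ ∈ Set.Ioc 0 Real.pi)
    (hangle : θ ≤ EuclideanGeometry.angle x v y) :
    0 < Real.sin (θ / 2) / 2 ∧
      Real.sin (θ / 2) / 2 * (dist x v + dist y v) ≤ dist x y := by
  obtain ⟨hθ0, hθπ⟩ := hθ
  have hs : 0 < Real.sin (θ / 2) :=
    Real.sin_pos_of_pos_of_lt_pi (by linarith) (by linarith [Real.pi_pos])
  refine ⟨by linarith, ?_⟩
  set a := dist x v with ha
  set b := dist y v with hb
  set d := dist x y with hd
  have ha0 : 0 ≤ a := dist_nonneg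
  have hb0 : 0 ≤ b := dist_nonneg
  have hd0 : 0 ≤ d := dist_nonneg
  have hlaw := EuclideanGeometry.law_cos x v y
  have hcos : Real.cos (EuclideanGeometry.angle x v y) ≤ Real.cos θ :=
    Real.cos_le_cos_of_nonneg_of_le_pi (le_of_lt hθ0)
      (EuclideanGeometry.angle_le_pi x v y) hangle
  have hcθ : Real.cos θ = 1 - 2 * Real.sin (θ / 2) ^ 2 := by
    have h2 : Real.cos (2 * (θ / 2)) = 2 * Real.cos (θ / 2) ^ 2 - 1 := Real.cos_two_mul _
    have hsq := Real.sin_sq_add_cos_sq (θ / 2)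
    rw [show 2 * (θ / 2) = θ by ring] at h2
    nlinarith
  have hs1 : Real.sin (θ / 2) ≤ 1 := Real.sin_le_one _
  -- d^2 ≥ a^2 + b^2 - 2 a b cos θ ≥ (s/2)^2 (a+b)^2
  have key : (Real.sin (θ / 2) / 2 * (a + b)) ^ 2 ≤ d ^ 2 := by
    have h1 : a * a + b * b - 2 * a * b * Real.cos θ ≤ d * d := by
      nlinarith [mul_nonneg ha0 hb0]
    rw [hcθ] at h1
    have hss : Real.sin (θ / 2) ^ 2 ≤ 1 := by nlinarith
    nlinarith [mul_nonneg (by nlinarith : (0:ℝ) ≤ 1 - Real.sin (θ/2) ^ 2) (sq_nonneg (a - b)),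
      mul_nonneg (mul_nonneg ha0 hb0) (sq_nonneg (Real.sin (θ/2))), sq_nonneg (a - b)]
  have ht0 : 0 ≤ Real.sin (θ / 2) / 2 * (a + b) := by positivity
  exact (pow_le_pow_iff_left₀ ht0 hd0 two_ne_zero).mp key
end

section
/- Let α, β, γ be the angles of a triangle v₁v₂v₃ at vertices v₂, v₁, v₃ respectively (so α + β + γ = π). If |v₁v₂| ≤ |v₂v₃|, D ≥ 1, η > 0, and there is a point v₀ with |v₁v₀| ≥ D⁻¹|v₁v₂| such that the ray from v₁ through v₀ makes angle β′ ≤ π − η with the segment v₁v₂ where β′ ≥ β and α + β′ < π, and the rays from v₁ through v₀ and from v₂ through v₃ meet at a point x with |v₁x| ≥ |v₁v₀|, then α ≥ D⁻¹ sin(η/2). -/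
/-!
If `α ≥ η / 2` the claim follows from `sin (η / 2) ≤ η / 2`. Otherwise the rays `v₁v₀` and
`v₂v₃` meet at `x`, giving a triangle `v₁ v₂ x` with angles `β'` at `v₁`, `α` at `v₂` and
`δ = π - α - β'` at `x`. Since `v₁v₂` is not the longest side, `γ ≤ β ≤ β'`, which together with
`β' ≤ π - η` traps `δ` in `[η / 2, π / 2]`. The law of sines in `v₁ v₂ x` then gives
`sin α = |v₁x| sin δ / |v₁v₂| ≥ D⁻¹ sin (η / 2)`.
-/

open EuclideanGeometry Real

section

variable {V P : Type*} [NormedAddCommGroup V] [InnerProductSpace ℝ V] [MetricSpace P]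
  [NormedAddTorsor V P]

/-- Unlike `EuclideanGeometry.angle_le_iff_dist_le`, this allows degenerate triangles. -/
theorem angle_le_angle_of_dist_le {a b c : P} (h : dist a b ≤ dist a c) :
    ∠ a c b ≤ ∠ a b c := by
  rcases eq_or_ne b c with rfl | hbc
  · exact le_rfl
  rcases eq_or_ne a b with rfl | hab
  · rw [angle_self_of_ne hbc, angle_self_left]
    positivity
  have hab_pos : 0 < dist a b := dist_pos.2 hab
  have hac_pos : 0 < dist a c := hab_pos.trans_le h
  suffices cos (∠ a b c) ≤ cos (∠ a c b) from
    (strictAntiOn_cos.le_iff_ge ⟨angle_nonneg .., angle_le_pi ..⟩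
      ⟨angle_nonneg .., angle_le_pi ..⟩).1 this
  have hB := law_cos a b c
  have hC := law_cos a c b
  rw [dist_comm c b] at hB
  -- Multiplied by `2 |ab| |ac| |bc|`, the difference of the cosines factors as below.
  have key : 0 ≤ (dist a c - dist a b) * ((dist a b + dist a c) ^ 2 - dist b c ^ 2) :=
    mul_nonneg (by linarith)
      (sub_nonneg.2 (pow_le_pow_left₀ dist_nonneg (dist_triangle_left b c a) 2))
  refine le_of_mul_le_mul_left ?_
    (by have := dist_pos.2 hbc; positivity : 0 < 2 * dist a b * dist a c * dist b c)
  nlinarith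

theorem angle_eq_angle_of_sameRay (a : P) {b p q : P} (h : SameRay ℝ (p -ᵥ b) (q -ᵥ b))
    (hp : p ≠ b) (hq : q ≠ b) : ∠ a b p = ∠ a b q := by
  rcases wbtw_total_of_sameRay_vsub_left h with h | h
  · exact h.angle_eq_right a hp
  · exact (h.angle_eq_right a hq).symm

theorem mul_le_sin_angle_of_mul_dist_le {a b c : P} (hab : a ≠ b) {r s : ℝ} (hs : 0 ≤ s)
    (hr : r * dist a b ≤ dist a c) (hsin : s ≤ sin (∠ a c b)) : r * s ≤ sin (∠ a b c) := by
  have hsine : sin (∠ a b c) * dist a b = sin (∠ a c b) * dist a c := by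
    simpa only [angle_comm c b a, dist_comm b a] using law_sin c b a
  refine le_of_mul_le_mul_right ?_ (dist_pos.2 hab)
  calc r * s * dist a b = s * (r * dist a b) := by ring
    _ ≤ s * dist a c := mul_le_mul_of_nonneg_left hr hs
    _ ≤ sin (∠ a c b) * dist a c := mul_le_mul_of_nonneg_right hsin dist_nonneg
    _ = sin (∠ a b c) * dist a b := hsine.symm

end

/-- Computational core of the "no acute angles" lemma, via the law of sines. -/
theorem stmt3 (v₀ v₁ v₂ v₃ x : EuclideanSpace ℝ (Fin 2))
    (D η α β γ β' : ℝ) (hD : 1 ≤ D) (hη : 0 < η)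
    (hα : α = EuclideanGeometry.angle v₁ v₂ v₃)
    (hβ : β = EuclideanGeometry.angle v₂ v₁ v₃)
    (hγ : γ = EuclideanGeometry.angle v₂ v₃ v₁)
    (hsum : α + β + γ = Real.pi)
    (hside : dist v₁ v₂ ≤ dist v₂ v₃)
    (hv0 : D⁻¹ * dist v₁ v₂ ≤ dist v₁ v₀)
    (hβ' : β' = EuclideanGeometry.angle v₀ v₁ v₂)
    (hβ'1 : β ≤ β') (hβ'2 : β' ≤ Real.pi - η) (hαβ' : α + β' < Real.pi)
    (hx1 : SameRay ℝ (v₀ - v₁) (x - v₁))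
    (hx2 : SameRay ℝ (v₃ - v₂) (x - v₂))
    (hxfar : dist v₁ v₀ ≤ dist v₁ x) :
    D⁻¹ * Real.sin (η / 2) ≤ α := by
  have hα_nonneg : 0 ≤ α := hα ▸ angle_nonneg ..
  have hβ'_nonneg : 0 ≤ β' := hβ' ▸ angle_nonneg ..
  have hsin_nonneg : 0 ≤ sin (η / 2) := sin_nonneg_of_nonneg_of_le_pi (by linarith) (by linarith)
  rcases le_or_gt (η / 2) α with hαη | hαη
  · calc D⁻¹ * sin (η / 2) ≤ 1 * (η / 2) :=
          mul_le_mul (inv_le_one_of_one_le₀ hD) (sin_le (by linarith)) hsin_nonneg zero_le_one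
      _ ≤ α := by linarith
  have h₁₂ : v₁ ≠ v₂ := by rintro rfl; rw [angle_self_left] at hα; linarith
  have h₃₂ : v₃ ≠ v₂ := by rintro rfl; rw [angle_self_right] at hα; linarith
  have hγβ : γ ≤ β := hγ ▸ hβ ▸ angle_le_angle_of_dist_le (by rwa [dist_comm])
  have hv₁x : D⁻¹ * dist v₁ v₂ ≤ dist v₁ x := hv0.trans hxfar
  have hpos : 0 < D⁻¹ * dist v₁ v₂ := by have := dist_pos.2 h₁₂; positivity
  have h₀₁ : v₀ ≠ v₁ := (dist_pos.1 (hpos.trans_le hv0)).symm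
  have hx₁ : x ≠ v₁ := (dist_pos.1 (hpos.trans_le hv₁x)).symm
  have hβ'x : ∠ x v₁ v₂ = β' := by
    rw [hβ', angle_comm x, angle_comm v₀]
    exact (angle_eq_angle_of_sameRay v₂ hx1 h₀₁ hx₁).symm
  have hx₂ : x ≠ v₂ := by
    rintro rfl
    rw [angle_self_of_ne h₁₂.symm] at hβ'x
    linarith
  have hαx : ∠ v₁ v₂ x = α := hα ▸ (angle_eq_angle_of_sameRay v₁ hx2 h₃₂ hx₂).symm
  have hδ : ∠ v₁ x v₂ = π - α - β' := by
    linarith [angle_comm v₁ x v₂, angle_add_angle_add_angle_eq_pi v₁ hx₂]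
  have hsin : sin (η / 2) ≤ sin (∠ v₁ x v₂) :=
    sin_le_sin_of_le_of_le_pi_div_two (by linarith) (by linarith) (by linarith)
  calc D⁻¹ * sin (η / 2) ≤ sin (∠ v₁ v₂ x) :=
        mul_le_sin_angle_of_mul_dist_le h₁₂ hsin_nonneg hv₁x hsin
    _ = sin α := by rw [hαx]
    _ ≤ α := sin_le hα_nonneg
end

section
/- Let u, v be independent uniform random points in the unit disc U ⊂ ℝ². Then the distance from the origin to the segment [u, v] is a random variable whose distribution function F satisfies F(ε) ≤ Cε for all ε > 0 and some absolute constant C; i.e., P(dist(0, [u,v]) ≤ ε) ≤ Cε. -/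
/-!
If the segment `[u, v]` between two points of the unit disc passes within `ε` of the origin at
`x`, then `u ∧ v = x ∧ (v - u)`, so `|u ∧ v| ≤ 2ε`. For fixed `u ≠ 0` the points `v` of the disc
with `|u ∧ v| ≤ 2ε` lie in a strip of width `4ε / ‖u‖` around the line `ℝ u`, of area at most
`8ε / ‖u‖`; integrating over `u` by Fubini gives the bound `C ε`, since `‖u‖⁻¹` is integrable on
the disc in dimension two.
-/

open MeasureTheory Metric Module
open scoped ENNReal RealInnerProductSpace EuclideanSpace

theorem isCompact_segment {F : Type*} [TopologicalSpace F] [AddCommGroup F] [Module ℝ F]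
    [ContinuousAdd F] [ContinuousSMul ℝ F] (u v : F) :
    IsCompact (segment ℝ u v) := by
  rw [segment_eq_image]
  exact isCompact_Icc.image (by fun_prop)

theorem lintegral_closedBall_inv_norm_lt_top {F : Type*} [NormedAddCommGroup F]
    [NormedSpace ℝ F] [FiniteDimensional ℝ F] [MeasurableSpace F] [BorelSpace F]
    (μ : Measure F) [μ.IsAddHaarMeasure] (hF : 2 ≤ finrank ℝ F) (r : ℝ) :
    ∫⁻ u in closedBall 0 r, ENNReal.ofReal ‖u‖⁻¹ ∂μ < ∞ := by
  have h : IntegrableOn (fun u : F => ‖u‖⁻¹) (ball 0 (r + 1)) μ :=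
    integrableOn_ball_of_norm_le_rpow (by omega) (C := 1) (α := 1) (by exact_mod_cast hF)
      (Filter.Eventually.of_forall fun x => by simp [Real.rpow_neg_one]) (by fun_prop)
  exact (h.mono_set (closedBall_subset_ball (by linarith))).lintegral_lt_top

section Strip

variable {F : Type*} [NormedAddCommGroup F] [InnerProductSpace ℝ F] [FiniteDimensional ℝ F]
  [MeasurableSpace F] [BorelSpace F]

theorem volume_abs_inner_le_inter_closedBall_le {n : ℕ} (hF : finrank ℝ F = n + 1) {e : F}
    (he : ‖e‖ = 1) (t r : ℝ) :
    volume ({v | |⟪e, v⟫| ≤ t} ∩ closedBall 0 r) ≤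
      ENNReal.ofReal (2 * t) * ENNReal.ofReal (2 * r) ^ n := by
  obtain ⟨b, hb⟩ := Orthonormal.exists_orthonormalBasis_extension_of_card_eq (𝕜 := ℝ)
    (ι := Fin (n + 1)) (by simp [hF]) (v := fun _ => e) (s := {0})
    ⟨fun _ => he, fun i j hij => (hij (Subsingleton.elim i j)).elim⟩
  set w : Fin (n + 1) → ℝ := Matrix.vecCons t fun _ => r
  set box : Set (EuclideanSpace ℝ (Fin (n + 1))) :=
    WithLp.ofLp ⁻¹' Set.univ.pi fun i => Set.Icc (-w i) (w i)
  have hpi : MeasurableSet (Set.univ.pi fun i => Set.Icc (-w i) (w i)) :=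
    MeasurableSet.univ_pi fun _ => measurableSet_Icc
  calc volume ({v | |⟪e, v⟫| ≤ t} ∩ closedBall 0 r)
      ≤ volume (b.repr ⁻¹' box) := by
        refine measure_mono fun v ⟨hvt, hvr⟩ i _ => ?_
        rw [OrthonormalBasis.repr_apply_apply, Set.mem_Icc, ← abs_le]
        refine Fin.cases ?_ (fun j => ?_) i
        · simpa [w, hb 0 rfl] using hvt
        · simp only [w, Matrix.cons_val_succ]
          calc |⟪b j.succ, v⟫| ≤ ‖b j.succ‖ * ‖v‖ := abs_real_inner_le_norm _ _
            _ ≤ r := by simpa [b.orthonormal.1] using hvr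
    _ = ∏ i, volume (Set.Icc (-w i) (w i)) := by
        rw [b.measurePreserving_repr.measure_preimage
          (hpi.preimage (PiLp.volume_preserving_ofLp _).measurable).nullMeasurableSet,
          (PiLp.volume_preserving_ofLp _).measure_preimage hpi.nullMeasurableSet, volume_pi_pi]
    _ = ENNReal.ofReal (2 * t) * ENNReal.ofReal (2 * r) ^ n := by
        simp [Fin.prod_univ_succ, w, Real.volume_Icc, two_mul]

end Strip

section Oriented

attribute [local instance] FiniteDimensional.of_fact_finrank_eq_two

variable {E : Type*} [NormedAddCommGroup E] [InnerProductSpace ℝ E] [Fact (finrank ℝ E = 2)]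
  (o : Orientation ℝ E (Fin 2))

local notation "ω" => o.areaForm

namespace Orientation

theorem abs_areaForm_le_norm_sub_mul_infDist (u v : E) :
    |ω u v| ≤ ‖v - u‖ * infDist 0 (segment ℝ u v) := by
  obtain ⟨x, ⟨a, b, -, -, hab, rfl⟩, hx⟩ :=
    (isCompact_segment u v).exists_infDist_eq_dist ⟨u, left_mem_segment ℝ u v⟩ 0
  have hω : ω u v = ω (a • u + b • v) (v - u) := by
    simp only [map_add, map_smul, map_sub, LinearMap.add_apply, LinearMap.smul_apply,
      o.areaForm_apply_self, o.areaForm_swap v u, smul_eq_mul]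
    linear_combination (-(ω u v)) * hab
  rw [hx, dist_zero_left, hω, mul_comm]
  exact o.abs_areaForm_le _ _

theorem continuous_areaForm : Continuous fun p : E × E => ω p.1 p.2 := by
  simpa [o.areaForm'_apply] using
    (o.areaForm'.continuous.comp continuous_fst).clm_apply continuous_snd

end Orientation

variable [MeasurableSpace E] [BorelSpace E]

namespace Orientation

theorem volume_abs_areaForm_le_inter_closedBall_le {u : E} (hu : u ≠ 0) (a r : ℝ) :
    volume ({v | |ω u v| ≤ a} ∩ closedBall 0 r) ≤
      ENNReal.ofReal (2 * a / ‖u‖) * ENNReal.ofReal (2 * r) := by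
  have hu' : 0 < ‖u‖ := norm_pos_iff.mpr hu
  have hset :
      {v | |ω u v| ≤ a} = {v | |⟪‖u‖⁻¹ • o.rightAngleRotation u, v⟫| ≤ a / ‖u‖} := by
    ext v
    simp only [Set.mem_ofPred_eq, real_inner_smul_left, o.inner_rightAngleRotation_left, abs_mul,
      abs_inv, abs_norm, inv_mul_le_iff₀ hu', mul_div_cancel₀ _ hu'.ne']
  have he : ‖‖u‖⁻¹ • o.rightAngleRotation u‖ = 1 := by
    rw [norm_smul, LinearIsometryEquiv.norm_map, norm_inv, norm_norm, inv_mul_cancel₀ hu'.ne']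
  rw [hset, mul_div_assoc]
  simpa using volume_abs_inner_le_inter_closedBall_le (n := 1) Fact.out he (a / ‖u‖) r

theorem prod_restrict_closedBall_abs_areaForm_le (a r : ℝ) :
    ((volume.restrict (closedBall (0 : E) r)).prod (volume.restrict (closedBall 0 r)))
        {p | |ω p.1 p.2| ≤ a} ≤
      ENNReal.ofReal (2 * a) * ENNReal.ofReal (2 * r) *
        ∫⁻ u in closedBall (0 : E) r, ENNReal.ofReal ‖u‖⁻¹ := by
  have hmeas : MeasurableSet {p : E × E | |ω p.1 p.2| ≤ a} :=
    measurableSet_le (continuous_abs.comp o.continuous_areaForm).measurable measurable_const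
  have : Nontrivial E := Module.nontrivial_of_finrank_eq_succ (R := ℝ) (n := 1) Fact.out
  have hne : ∀ᵐ u ∂volume.restrict (closedBall (0 : E) r), u ≠ 0 :=
    ae_restrict_of_ae (compl_mem_ae_iff.mpr (measure_singleton 0))
  rw [Measure.prod_apply hmeas, ← lintegral_const_mul' _ _ (by finiteness)]
  refine lintegral_mono_ae (hne.mono fun u hu => ?_)
  rw [Measure.restrict_apply (hmeas.preimage measurable_prodMk_left)]
  calc volume ({v | |ω u v| ≤ a} ∩ closedBall 0 r)
      ≤ ENNReal.ofReal (2 * a / ‖u‖) * ENNReal.ofReal (2 * r) :=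
        o.volume_abs_areaForm_le_inter_closedBall_le hu a r
    _ = ENNReal.ofReal (2 * a) * ENNReal.ofReal (2 * r) * ENNReal.ofReal ‖u‖⁻¹ := by
        rw [div_eq_mul_inv, ENNReal.ofReal_mul' (by positivity), mul_right_comm]

end Orientation

theorem prod_restrict_closedBall_infDist_segment_le (ε r : ℝ) :
    ((volume.restrict (closedBall (0 : E) r)).prod (volume.restrict (closedBall 0 r)))
        {p | infDist 0 (segment ℝ p.1 p.2) ≤ ε} ≤
      ENNReal.ofReal (2 * (2 * r * ε)) * ENNReal.ofReal (2 * r) *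
        ∫⁻ u in closedBall (0 : E) r, ENNReal.ofReal ‖u‖⁻¹ := by
  let o : Orientation ℝ E (Fin 2) := (Module.finBasisOfFinrankEq ℝ E Fact.out).orientation
  refine (measure_mono_ae ?_).trans (o.prod_restrict_closedBall_abs_areaForm_le (2 * r * ε) r)
  rw [Measure.prod_restrict]
  filter_upwards [ae_restrict_mem (measurableSet_closedBall.prod measurableSet_closedBall)]
    with ⟨u, v⟩ huv hε
  obtain ⟨hu, hv⟩ : ‖u‖ ≤ r ∧ ‖v‖ ≤ r := by simpa using huv
  change infDist 0 (segment ℝ u v) ≤ ε at hε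
  change |o.areaForm u v| ≤ 2 * r * ε
  calc |o.areaForm u v| ≤ ‖v - u‖ * infDist 0 (segment ℝ u v) :=
        o.abs_areaForm_le_norm_sub_mul_infDist u v
    _ ≤ 2 * r * ε := mul_le_mul (by linarith [norm_sub_le v u]) hε infDist_nonneg
        (by linarith [(norm_nonneg u).trans hu])

end Oriented

open MeasureTheory in
/-- For `u, v` independent uniform points in the unit disc, the distance from the
origin to the segment `[u,v]` satisfies `P(dist ≤ ε) ≤ C ε`. -/
theorem stmt9 : ∃ C : ℝ, 0 < C ∧ ∀ ε : ℝ, 0 < ε →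
    (((volume (Metric.closedBall (0 : EuclideanSpace ℝ (Fin 2)) 1))⁻¹ •
        volume.restrict (Metric.closedBall (0 : EuclideanSpace ℝ (Fin 2)) 1)).prod
      ((volume (Metric.closedBall (0 : EuclideanSpace ℝ (Fin 2)) 1))⁻¹ •
        volume.restrict (Metric.closedBall (0 : EuclideanSpace ℝ (Fin 2)) 1)))
      {p : EuclideanSpace ℝ (Fin 2) × EuclideanSpace ℝ (Fin 2) |
        Metric.infDist 0 (segment ℝ p.1 p.2) ≤ ε} ≤ ENNReal.ofReal (C * ε) := by
  set B := closedBall (0 : EuclideanSpace ℝ (Fin 2)) 1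
  set K := (volume B)⁻¹ * (volume B)⁻¹ *
    (ENNReal.ofReal 4 * ENNReal.ofReal 2 * ∫⁻ u in B, ENNReal.ofReal ‖u‖⁻¹)
  have hK : K ≠ ∞ := by
    have hB : (volume B)⁻¹ ≠ ∞ :=
      ENNReal.inv_ne_top.mpr (measure_closedBall_pos _ _ one_pos).ne'
    have hI := lintegral_closedBall_inv_norm_lt_top (volume : Measure (EuclideanSpace ℝ (Fin 2)))
      (by simp) 1
    finiteness
  refine ⟨K.toReal + 1, by positivity, fun ε hε => ?_⟩
  rw [Measure.prod_smul_left, Measure.prod_smul_right, smul_smul, Measure.smul_apply, smul_eq_mul]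
  calc _ ≤ (volume B)⁻¹ * (volume B)⁻¹ * (ENNReal.ofReal (2 * (2 * 1 * ε)) *
        ENNReal.ofReal (2 * 1) * ∫⁻ u in B, ENNReal.ofReal ‖u‖⁻¹) := by
        gcongr
        exact prod_restrict_closedBall_infDist_segment_le ε 1
    _ = ENNReal.ofReal (K.toReal * ε) := by
        rw [ENNReal.ofReal_mul ENNReal.toReal_nonneg, ENNReal.ofReal_toReal hK,
          show 2 * (2 * 1 * ε) = 4 * ε by ring, ENNReal.ofReal_mul (by norm_num), mul_one]
        ring
    _ ≤ ENNReal.ofReal ((K.toReal + 1) * ε) := by gcongr; linarith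
end

section
/- Let H be a set of positive functions on a set X, all taking the value 1 at a basepoint x₀, which is closed under the operation (h₁, h₂, c) ↦ (c h₁ − h₂)/(c − 1) whenever c > 1 and c h₁ ≥ h₂ pointwise. Suppose sup{h₁(x)/h₂(x) : h₁, h₂ ∈ H, x ∈ X} = c < ∞. Then c = 1; i.e., H contains at most one function. -/
/-- Ancona's argument: a family of normalized positive functions, closed under
`(h₁,h₂,c) ↦ (c h₁ - h₂)/(c-1)`, whose pairwise ratios have finite supremum `c`,
satisfies `c = 1`, i.e. the family has at most one element. -/
theorem stmt14 {X : Type*} (x₀ : X) (H : Set (X → ℝ))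
    (hpos : ∀ h ∈ H, ∀ x, 0 < h x) (hnorm : ∀ h ∈ H, h x₀ = 1)
    (hclosed : ∀ h₁ ∈ H, ∀ h₂ ∈ H, ∀ c : ℝ, 1 < c → (∀ x, h₂ x ≤ c * h₁ x) →
      (fun x => (c * h₁ x - h₂ x) / (c - 1)) ∈ H)
    (hne : H.Nonempty) (c : ℝ)
    (hc : c = sSup {r : ℝ | ∃ h₁ ∈ H, ∃ h₂ ∈ H, ∃ x, r = h₁ x / h₂ x})
    (hbdd : BddAbove {r : ℝ | ∃ h₁ ∈ H, ∃ h₂ ∈ H, ∃ x, r = h₁ x / h₂ x}) :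
    c = 1 ∧ H.Subsingleton := by
  set S : Set ℝ := {r : ℝ | ∃ h₁ ∈ H, ∃ h₂ ∈ H, ∃ x, r = h₁ x / h₂ x} with hS
  obtain ⟨h₀, hh₀⟩ := hne
  have h1S : (1 : ℝ) ∈ S := by
    refine ⟨h₀, hh₀, h₀, hh₀, x₀, ?_⟩
    rw [hnorm h₀ hh₀]; norm_num
  have hc1 : (1 : ℝ) ≤ c := hc ▸ le_csSup hbdd h1S
  -- every ratio is ≤ c
  have hratio : ∀ h₁ ∈ H, ∀ h₂ ∈ H, ∀ x, h₁ x / h₂ x ≤ c :=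
    fun h₁ hm₁ h₂ hm₂ x => hc ▸ le_csSup hbdd ⟨h₁, hm₁, h₂, hm₂, x, rfl⟩
  have hle : ∀ h₁ ∈ H, ∀ h₂ ∈ H, ∀ x, h₂ x ≤ c * h₁ x := by
    intro h₁ hm₁ h₂ hm₂ x
    have := hratio h₂ hm₂ h₁ hm₁ x
    rwa [div_le_iff₀ (hpos h₁ hm₁ x)] at this
  have hceq : c = 1 := by
    by_contra hne1
    have hc1' : 1 < c := lt_of_le_of_ne hc1 (Ne.symm hne1)
    -- improved bound: every ratio ≤ c²/(2c-1)
    have key : ∀ r ∈ S, r ≤ c ^ 2 / (2 * c - 1) := by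
      rintro r ⟨h₁, hm₁, h₂, hm₂, x, rfl⟩
      have hm₃ := hclosed h₂ hm₂ h₁ hm₁ c hc1' (hle h₂ hm₂ h₁ hm₁)
      have h2 := hle (fun x => (c * h₂ x - h₁ x) / (c - 1)) hm₃ h₁ hm₁ x
      have hc0 : (0 : ℝ) < c - 1 := by linarith
      rw [← mul_div_assoc, le_div_iff₀ hc0] at h2
      have h3 : (2 * c - 1) * h₁ x ≤ c ^ 2 * h₂ x := by nlinarith
      have h2c : (0 : ℝ) < 2 * c - 1 := by linarith
      rw [div_le_div_iff₀ (hpos h₂ hm₂ x) h2c]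
      nlinarith
    have hcle : c ≤ c ^ 2 / (2 * c - 1) := hc.le.trans (csSup_le ⟨1, h1S⟩ key)
    have h2c : (0 : ℝ) < 2 * c - 1 := by linarith
    rw [le_div_iff₀ h2c] at hcle
    nlinarith
  refine ⟨hceq, fun h₁ hm₁ h₂ hm₂ => funext fun x => ?_⟩
  have a := hle h₁ hm₁ h₂ hm₂ x
  have b := hle h₂ hm₂ h₁ hm₁ x
  rw [hceq, one_mul] at a b
  linarith
end
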